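/- arXiv:1911.08781 — 3 statements merged into one kernel-verified Lean document; each statement's English description precedes it below -/
import Mathlib

section
/- Let L be a group and let μ : M → L and ν : N → L be crossed modules of groups over L, with induced mutual actions ᵐn := ^(μ(m))n and ⁿm := ^(ν(n))m. Let λ : M ⊗ N → L be the unique group homomorphism with λ(m ⊗ n) = μ(m)·ν(n)·μ(m)⁻¹·ν(n)⁻¹, and let L act on M ⊗ N by the unique action by automorphisms with ˡ(m ⊗ n) = (ˡm) ⊗ (ˡn). Then (λ, this action) is a crossed module of groups over L: λ(ˡt) = l·λ(t)·l⁻¹ and ^(λ(t))t' = t·t'·t⁻¹ for all l ∈ L and t, t' ∈ M ⊗ N. -/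
/-- A crossed module of groups: a homomorphism `μ : M → L` together with an action of `L`
on `M` by automorphisms, such that `μ` is equivariant (with `L` acting on itself by
conjugation) and the Peiffer identity holds. -/
def IsCrossedModule {M L : Type*} [Group M] [Group L]
    (μ : M →* L) (σ : L →* MulAut M) : Prop :=
  (∀ l m, μ (σ l m) = l * μ m * l⁻¹) ∧ ∀ m m', σ (μ m) m' = m * m' * m⁻¹

/-- The defining relations of the Brown–Loday non-abelian tensor product of two groups `M`
and `N` acting on each other via `actM : M → N → N` and `actN : N → M → M` (and on
themselves by conjugation): `(m * m') ⊗ n = (ᵐm' ⊗ ᵐn) * (m ⊗ n)` and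
`m ⊗ (n * n') = (m ⊗ n) * (ⁿm ⊗ ⁿn')`. -/
def tensorRels (M N : Type*) [Group M] [Group N]
    (actM : M → N → N) (actN : N → M → M) : Set (FreeGroup (M × N)) :=
  (Set.range fun p : M × M × N =>
    FreeGroup.of (p.1 * p.2.1, p.2.2) *
      (FreeGroup.of (p.1 * p.2.1 * p.1⁻¹, actM p.1 p.2.2) * FreeGroup.of (p.1, p.2.2))⁻¹) ∪
  (Set.range fun p : M × N × N =>
    FreeGroup.of (p.1, p.2.1 * p.2.2) *
      (FreeGroup.of (p.1, p.2.1) *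
        FreeGroup.of (actN p.2.1 p.1, p.2.1 * p.2.2 * p.2.1⁻¹))⁻¹)

/-- The Brown–Loday non-abelian tensor product `M ⊗ N` of groups `M` and `N` acting on
each other, presented by generators `m ⊗ n` and the tensor relations. -/
abbrev NATensor (M N : Type*) [Group M] [Group N]
    (actM : M → N → N) (actN : N → M → M) : Type _ :=
  PresentedGroup (tensorRels M N actM actN)

/-- The generator `m ⊗ n` of the non-abelian tensor product. -/
abbrev tensorOf {M N : Type*} [Group M] [Group N]
    {actM : M → N → N} {actN : N → M → M} (m : M) (n : N) :
    NATensor M N actM actN :=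
  PresentedGroup.of (m, n)

/-!
Both axioms are equalities of homomorphisms out of the presented group `M ⊗ N`, so they only
need to be checked on generators `m ⊗ n`. Equivariance of `λ` is then a computation in `L`.
The Peiffer identity reduces to `(m ⊗ n) (a ⊗ b) (m ⊗ n)⁻¹ = ^⁅μ m, ν n⁆ (a ⊗ b)`, which comes
from expanding `(m m') ⊗ (n n')` with the two defining relations in the two possible orders.
-/

namespace IsCrossedModule

variable {M L : Type*} [Group M] [Group L] {μ : M →* L} {σ : L →* MulAut M}

theorem act_conj (h : IsCrossedModule μ σ) (l : L) (m m' : M) :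
    σ l (m * m' * m⁻¹) = σ (l * μ m) m' := by
  rw [← h.2, map_mul, MulAut.mul_apply]

theorem act_mul_act_mul_act_inv (h : IsCrossedModule μ σ) (l : L) (m m' : M) :
    σ l m * σ l m' * (σ l m)⁻¹ = σ (l * μ m) m' := by
  rw [← map_inv, ← map_mul, ← map_mul, h.act_conj]

end IsCrossedModule

theorem PresentedGroup.mulAut_ext {α : Type*} {rels : Set (FreeGroup α)}
    {e f : MulAut (PresentedGroup rels)} (h : ∀ x, e (.of x) = f (.of x)) : e = f :=
  MulEquiv.toMonoidHom_injective (PresentedGroup.ext h)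

namespace NATensor

variable {M N : Type*} [Group M] [Group N] {actM : M → N → N} {actN : N → M → M}

theorem tensorOf_mul_left (m m' : M) (n : N) :
    (tensorOf (m * m') n : NATensor M N actM actN) =
      tensorOf (m * m' * m⁻¹) (actM m n) * tensorOf m n :=
  PresentedGroup.mk_eq_mk_of_mul_inv_mem (Or.inl ⟨(m, m', n), rfl⟩)

theorem tensorOf_mul_right (m : M) (n n' : N) :
    (tensorOf m (n * n') : NATensor M N actM actN) =
      tensorOf m n * tensorOf (actN n m) (n * n' * n⁻¹) :=
  PresentedGroup.mk_eq_mk_of_mul_inv_mem (Or.inr ⟨(m, n, n'), rfl⟩)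

section CrossedModule

variable {L : Type*} [Group L]
  {μ : M →* L} {ν : N →* L} {σM : L →* MulAut M} {σN : L →* MulAut N}

open scoped commutatorElement

theorem tensorOf_act_mul_tensorOf (hμ : IsCrossedModule μ σM) (hν : IsCrossedModule ν σN)
    (m m' : M) (n n' : N) :
    (tensorOf (σM (μ m * ν n) m') (σN (μ m * ν n) n') :
        NATensor M N (fun m n => σN (μ m) n) (fun n m => σM (ν n) m)) * tensorOf m n =
      tensorOf m n * tensorOf (σM (ν n * μ m) m') (σN (ν n * μ m) n') := by
  have ha : σM (ν (σN (μ m) n)) (m * m' * m⁻¹) = σM (μ m * ν n) m' := by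
    rw [hμ.act_conj, hν.1, inv_mul_cancel_right]
  have hb : σN (μ m) n * σN (μ m) n' * (σN (μ m) n)⁻¹ = σN (μ m * ν n) n' :=
    hν.act_mul_act_mul_act_inv _ _ _
  have hc : σM (ν n) m * σM (ν n) m' * (σM (ν n) m)⁻¹ = σM (ν n * μ m) m' :=
    hμ.act_mul_act_mul_act_inv _ _ _
  have hd : σN (μ (σM (ν n) m)) (n * n' * n⁻¹) = σN (ν n * μ m) n' := by
    rw [hν.act_conj, hμ.1, inv_mul_cancel_right]
  have expand : tensorOf (m * m' * m⁻¹) (σN (μ m) n) *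
        (tensorOf (σM (μ m * ν n) m') (σN (μ m * ν n) n') * tensorOf m n) *
        tensorOf (σM (ν n) m) (n * n' * n⁻¹) =
      tensorOf (m * m' * m⁻¹) (σN (μ m) n) *
        (tensorOf m n * tensorOf (σM (ν n * μ m) m') (σN (ν n * μ m) n')) *
        tensorOf (σM (ν n) m) (n * n' * n⁻¹) := calc
    _ = (tensorOf (m * m') (n * n') :
          NATensor M N (fun m n => σN (μ m) n) (fun n m => σM (ν n) m)) := by
      rw [tensorOf_mul_left m m' (n * n'), map_mul (σN (μ m)), tensorOf_mul_right _ (σN (μ m) n),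
        tensorOf_mul_right m n n', ha, hb]
      simp only [mul_assoc]
    _ = _ := by
      rw [tensorOf_mul_right (m * m') n n', tensorOf_mul_left m m' n, map_mul (σM (ν n)),
        tensorOf_mul_left (σM (ν n) m), hc, hd]
      simp only [mul_assoc]
  simpa only [mul_left_cancel_iff, mul_right_cancel_iff] using expand

theorem tensorOf_mul_tensorOf_mul_inv (hμ : IsCrossedModule μ σM) (hν : IsCrossedModule ν σN)
    (m a : M) (n b : N) :
    (tensorOf m n : NATensor M N (fun m n => σN (μ m) n) (fun n m => σM (ν n) m)) *
        tensorOf a b * (tensorOf m n)⁻¹ =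
      tensorOf (σM ⁅μ m, ν n⁆ a) (σN ⁅μ m, ν n⁆ b) := by
  have h := tensorOf_act_mul_tensorOf hμ hν m (σM (ν n * μ m)⁻¹ a) n (σN (ν n * μ m)⁻¹ b)
  simp only [← MulAut.mul_apply, ← map_mul, mul_inv_cancel, map_one, MulAut.one_apply] at h
  rw [mul_inv_eq_iff_eq_mul, ← h, commutatorElement_def, mul_inv_rev, ← mul_assoc]

end CrossedModule

end NATensor

/-- Given crossed modules `μ : M → L` and `ν : N → L`, the homomorphism
`λ : M ⊗ N → L` with `λ(m ⊗ n) = μ(m)·ν(n)·μ(m)⁻¹·ν(n)⁻¹` together with the action of `L`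
on `M ⊗ N` determined by `ˡ(m ⊗ n) = (ˡm) ⊗ (ˡn)` is a crossed module over `L`. -/
theorem tensor_is_crossed_module
    {M N L : Type*} [Group M] [Group N] [Group L]
    (μ : M →* L) (ν : N →* L) (σM : L →* MulAut M) (σN : L →* MulAut N)
    (hμ : IsCrossedModule μ σM) (hν : IsCrossedModule ν σN)
    (lam : NATensor M N (fun m n => σN (μ m) n) (fun n m => σM (ν n) m) →* L)
    (hlam : ∀ (m : M) (n : N),
      lam (tensorOf m n) = μ m * ν n * (μ m)⁻¹ * (ν n)⁻¹)
    (φ : L →* MulAut (NATensor M N (fun m n => σN (μ m) n) (fun n m => σM (ν n) m)))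
    (hφ : ∀ (l : L) (m : M) (n : N),
      φ l (tensorOf m n) = tensorOf (σM l m) (σN l n)) :
    IsCrossedModule lam φ := by
  refine ⟨fun l t => ?_, fun t t' => ?_⟩
  · have hequiv : lam.comp (φ l).toMonoidHom = (MulAut.conj l).toMonoidHom.comp lam :=
      PresentedGroup.ext fun ⟨m, n⟩ => by
        simp only [MonoidHom.comp_apply, MulEquiv.coe_toMonoidHom, hφ, hlam, hμ.1, hν.1,
          MulAut.conj_apply]
        group
    exact DFunLike.congr_fun hequiv t
  · have hpeiffer : φ.comp lam = MulAut.conj :=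
      PresentedGroup.ext fun ⟨m, n⟩ => PresentedGroup.mulAut_ext fun ⟨a, b⟩ => by
        rw [MonoidHom.comp_apply, hlam, ← commutatorElement_def, hφ, MulAut.conj_apply,
          NATensor.tensorOf_mul_tensorOf_mul_inv hμ hν]
    exact DFunLike.congr_fun (DFunLike.congr_fun hpeiffer t) t'
end

section
/- Let L be a group, let μ : M → L and ν : N → L be crossed modules of groups over L, with induced mutual actions ᵐn := ^(μ(m))n and ⁿm := ^(ν(n))m, and let (P, p_M : P → M, p_N : P → N, L-actions, h' : M × N → P) be any crossed square of groups over the same μ and ν. Then there exists a unique group homomorphism φ : M ⊗ N → P such that φ(m ⊗ n) = h'(m, n) for all m ∈ M, n ∈ N; moreover p_M ∘ φ = π_M and p_N ∘ φ = π_N, where π_M and π_N are the homomorphisms determined by π_M(m ⊗ n) = m·(ⁿm)⁻¹ and π_N(m ⊗ n) = (ᵐn)·n⁻¹. -/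
/-- A crossed square of groups (axioms (X0)–(X4) of Guin-Waléry–Brown–Loday), given by the
commutative square `μ ∘ p_M = ν ∘ p_N`, actions `σM`, `σN`, `σP` of `L` on `M`, `N`, `P`
and a function `h : M × N → P`. -/
def IsCrossedSquareGrp {P M N L : Type*} [Group P] [Group M] [Group N] [Group L]
    (pM : P →* M) (pN : P →* N) (μ : M →* L) (ν : N →* L)
    (σM : L →* MulAut M) (σN : L →* MulAut N) (σP : L →* MulAut P)
    (h : M → N → P) : Prop :=
  -- commutative square
  μ.comp pM = ν.comp pN ∧
  -- (X.0)
  (∀ m m' n, h (m * m') n = σP (μ m) (h m' n) * h m n) ∧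
  (∀ m n n', h m (n * n') = h m n * σP (ν n) (h m n')) ∧
  -- (X.1)
  (∀ l p, pM (σP l p) = σM l (pM p)) ∧
  (∀ l p, pN (σP l p) = σN l (pN p)) ∧
  IsCrossedModule μ σM ∧ IsCrossedModule ν σN ∧ IsCrossedModule (μ.comp pM) σP ∧
  -- (X.2)
  (∀ m n, pM (h m n) = m * (σM (ν n) m)⁻¹) ∧
  (∀ m n, pN (h m n) = σN (μ m) n * n⁻¹) ∧
  -- (X.3)
  (∀ p n, h (pM p) n = p * (σP (ν n) p)⁻¹) ∧
  (∀ m p, h m (pN p) = σP (μ m) p * p⁻¹) ∧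
  -- (X.4)
  (∀ l m n, σP l (h m n) = h (σM l m) (σN l n))

/-! The crossed-square axiom (X0), rewritten with (X4) and the Peiffer identities, says exactly
that `h'` respects the defining relations of `M ⊗ N`, so it factors through the presentation;
uniqueness holds because the `m ⊗ n` generate, and (X2) identifies `p_M ∘ φ`, `p_N ∘ φ` with
`π_M`, `π_N` on generators. -/

namespace NATensor

variable {M N P : Type*} [Group M] [Group N] [Group P]
  {actM : M → N → N} {actN : N → M → M}

theorem hom_ext {φ ψ : NATensor M N actM actN →* P}
    (h : ∀ m n, φ (tensorOf m n) = ψ (tensorOf m n)) : φ = ψ :=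
  PresentedGroup.ext fun ⟨m, n⟩ => h m n

def lift (h : M → N → P)
    (h_mul_left : ∀ m m' n, h (m * m') n = h (m * m' * m⁻¹) (actM m n) * h m n)
    (h_mul_right : ∀ m n n', h m (n * n') = h m n * h (actN n m) (n * n' * n⁻¹)) :
    NATensor M N actM actN →* P :=
  PresentedGroup.toGroup (f := fun p : M × N => h p.1 p.2) <| by
    rintro r (⟨⟨m, m', n⟩, rfl⟩ | ⟨⟨m, n, n'⟩, rfl⟩) <;>
      simp only [map_mul, map_inv, FreeGroup.lift_apply_of, mul_inv_eq_one]
    exacts [h_mul_left m m' n, h_mul_right m n n']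

@[simp]
theorem lift_tensorOf (h : M → N → P)
    (h_mul_left : ∀ m m' n, h (m * m') n = h (m * m' * m⁻¹) (actM m n) * h m n)
    (h_mul_right : ∀ m n n', h m (n * n') = h m n * h (actN n m) (n * n' * n⁻¹))
    (m : M) (n : N) : lift h h_mul_left h_mul_right (tensorOf m n) = h m n :=
  PresentedGroup.toGroup.of _

end NATensor

namespace IsCrossedSquareGrp

variable {M N L P : Type*} [Group M] [Group N] [Group L] [Group P]
  {μ : M →* L} {ν : N →* L} {σM : L →* MulAut M} {σN : L →* MulAut N}
  {pM : P →* M} {pN : P →* N} {σP : L →* MulAut P} {h : M → N → P}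

theorem h_mul_left (hsq : IsCrossedSquareGrp pM pN μ ν σM σN σP h) (m m' : M) (n : N) :
    h (m * m') n = h (m * m' * m⁻¹) (σN (μ m) n) * h m n := by
  obtain ⟨-, hX0, -, -, -, hμ, -, -, -, -, -, -, hX4⟩ := hsq
  rw [hX0, hX4, hμ.2]

theorem h_mul_right (hsq : IsCrossedSquareGrp pM pN μ ν σM σN σP h) (m : M) (n n' : N) :
    h m (n * n') = h m n * h (σM (ν n) m) (n * n' * n⁻¹) := by
  obtain ⟨-, -, hX0, -, -, -, hν, -, -, -, -, -, hX4⟩ := hsq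
  rw [hX0, hX4, hν.2]

theorem pM_h (hsq : IsCrossedSquareGrp pM pN μ ν σM σN σP h) (m : M) (n : N) :
    pM (h m n) = m * (σM (ν n) m)⁻¹ := by
  obtain ⟨-, -, -, -, -, -, -, -, hX2, -⟩ := hsq
  exact hX2 m n

theorem pN_h (hsq : IsCrossedSquareGrp pM pN μ ν σM σN σP h) (m : M) (n : N) :
    pN (h m n) = σN (μ m) n * n⁻¹ := by
  obtain ⟨-, -, -, -, -, -, -, -, -, hX2, -⟩ := hsq
  exact hX2 m n

end IsCrossedSquareGrp

theorem tensor_universal_property_general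
    {M N L P : Type*} [Group M] [Group N] [Group L] [Group P]
    (μ : M →* L) (ν : N →* L) (σM : L →* MulAut M) (σN : L →* MulAut N)
    (pM : P →* M) (pN : P →* N) (σP : L →* MulAut P) (h' : M → N → P)
    (hsq : IsCrossedSquareGrp pM pN μ ν σM σN σP h')
    (πM : NATensor M N (fun m n => σN (μ m) n) (fun n m => σM (ν n) m) →* M)
    (hπM : ∀ (m : M) (n : N), πM (tensorOf m n) = m * (σM (ν n) m)⁻¹)
    (πN : NATensor M N (fun m n => σN (μ m) n) (fun n m => σM (ν n) m) →* N)
    (hπN : ∀ (m : M) (n : N), πN (tensorOf m n) = σN (μ m) n * n⁻¹) :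
    (∃! φ : NATensor M N (fun m n => σN (μ m) n) (fun n m => σM (ν n) m) →* P,
      ∀ (m : M) (n : N), φ (tensorOf m n) = h' m n) ∧
    (∀ φ : NATensor M N (fun m n => σN (μ m) n) (fun n m => σM (ν n) m) →* P,
      (∀ (m : M) (n : N), φ (tensorOf m n) = h' m n) →
        pM.comp φ = πM ∧ pN.comp φ = πN) := by
  have hlift := NATensor.lift_tensorOf h' hsq.h_mul_left hsq.h_mul_right
  refine ⟨⟨NATensor.lift h' hsq.h_mul_left hsq.h_mul_right, hlift,
    fun φ hφ => NATensor.hom_ext fun m n => by rw [hφ, hlift]⟩, fun φ hφ => ⟨?_, ?_⟩⟩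
  · exact NATensor.hom_ext fun m n => by rw [MonoidHom.comp_apply, hφ, hsq.pM_h, hπM]
  · exact NATensor.hom_ext fun m n => by rw [MonoidHom.comp_apply, hφ, hsq.pN_h, hπN]

/-- The universal property of the non-abelian tensor product: for any crossed square
`(P, p_M, p_N, h')` over the crossed modules `μ : M → L`, `ν : N → L`, there is a unique
homomorphism `φ : M ⊗ N → P` with `φ(m ⊗ n) = h'(m, n)`; moreover `p_M ∘ φ = π_M` and
`p_N ∘ φ = π_N`. -/
theorem tensor_universal_property
    {M N L P : Type*} [Group M] [Group N] [Group L] [Group P]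
    (μ : M →* L) (ν : N →* L) (σM : L →* MulAut M) (σN : L →* MulAut N)
    (hμ : IsCrossedModule μ σM) (hν : IsCrossedModule ν σN)
    (pM : P →* M) (pN : P →* N) (σP : L →* MulAut P) (h' : M → N → P)
    (hsq : IsCrossedSquareGrp pM pN μ ν σM σN σP h')
    (πM : NATensor M N (fun m n => σN (μ m) n) (fun n m => σM (ν n) m) →* M)
    (hπM : ∀ (m : M) (n : N), πM (tensorOf m n) = m * (σM (ν n) m)⁻¹)
    (πN : NATensor M N (fun m n => σN (μ m) n) (fun n m => σM (ν n) m) →* N)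
    (hπN : ∀ (m : M) (n : N), πN (tensorOf m n) = σN (μ m) n * n⁻¹) :
    (∃! φ : NATensor M N (fun m n => σN (μ m) n) (fun n m => σM (ν n) m) →* P,
      ∀ (m : M) (n : N), φ (tensorOf m n) = h' m n) ∧
    (∀ φ : NATensor M N (fun m n => σN (μ m) n) (fun n m => σM (ν n) m) →* P,
      (∀ (m : M) (n : N), φ (tensorOf m n) = h' m n) →
        pM.comp φ = πM ∧ pN.comp φ = πN) :=
  tensor_universal_property_general μ ν σM σN pM pN σP h' hsq πM hπM πN hπN
end

section
/- Let R be a commutative ring, L an R-Lie algebra, and let μ : M → L and ν : N → L be crossed modules of R-Lie algebras over L, with induced mutual actions m•n := μ(m)•n and n•m := ν(n)•m. Then there exist unique Lie algebra homomorphisms ρ_M : M ⊗ N → M and ρ_N : M ⊗ N → N such that ρ_M(m ⊗ n) = −(n•m) and ρ_N(m ⊗ n) = m•n for all m ∈ M, n ∈ N. -/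
universe u v

/-- An `R`-bilinear pairing `A × B → C` of modules, given as a plain two-argument
function. -/
def IsBilinearPairing (R : Type*) {A B C : Type*} [CommRing R]
    [AddCommGroup A] [Module R A] [AddCommGroup B] [Module R B]
    [AddCommGroup C] [Module R C] (f : A → B → C) : Prop :=
  (∀ (r : R) a b, f (r • a) b = r • f a b) ∧
  (∀ (r : R) a b, f a (r • b) = r • f a b) ∧
  (∀ a a' b, f (a + a') b = f a b + f a' b) ∧
  (∀ a b b', f a (b + b') = f a b + f a b')

/-- An action of an `R`-Lie algebra `M` on an `R`-Lie algebra `N`: an `R`-bilinear map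
`(m, n) ↦ m • n` with `⁅m, m'⁆ • n = m • (m' • n) − m' • (m • n)` and
`m • ⁅n, n'⁆ = ⁅m • n, n'⁆ + ⁅n, m • n'⁆`. -/
def IsLieAction (R : Type*) {M N : Type*} [CommRing R]
    [LieRing M] [LieAlgebra R M] [LieRing N] [LieAlgebra R N]
    (act : M → N → N) : Prop :=
  IsBilinearPairing R act ∧
  (∀ m m' n, act ⁅m, m'⁆ n = act m (act m' n) - act m' (act m n)) ∧
  (∀ m n n', act m ⁅n, n'⁆ = ⁅act m n, n'⁆ + ⁅n, act m n'⁆)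

/-- A Lie pairing `h : M × N → P` (Ellis) for Lie algebras `M`, `N` acting on each other
via `actM` and `actN`. -/
def IsLiePairing (R : Type*) {M N P : Type*} [CommRing R]
    [LieRing M] [LieAlgebra R M] [LieRing N] [LieAlgebra R N]
    [LieRing P] [LieAlgebra R P]
    (actM : M → N → N) (actN : N → M → M) (h : M → N → P) : Prop :=
  IsBilinearPairing R h ∧
  (∀ m m' n, h ⁅m, m'⁆ n = h m (actM m' n) - h m' (actM m n)) ∧
  (∀ m n n', h m ⁅n, n'⁆ = h (actN n' m) n - h (actN n m) n') ∧
  (∀ m m' n n', h (actN n m) (actM m' n') = -⁅h m n, h m' n'⁆)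

/-- A crossed module of `R`-Lie algebras over `L`: a Lie algebra homomorphism `μ : M → L`
together with an action of `L` on `M` such that `μ(l • m) = ⁅l, μ m⁆` and
`μ(m) • m' = ⁅m, m'⁆`. -/
def IsLieCrossedModule {R L M : Type*} [CommRing R]
    [LieRing L] [LieAlgebra R L] [LieRing M] [LieAlgebra R M]
    (μ : M →ₗ⁅R⁆ L) (act : L → M → M) : Prop :=
  IsLieAction R act ∧
  (∀ l m, μ (act l m) = ⁅l, μ m⁆) ∧
  (∀ m m', act (μ m) m' = ⁅m, m'⁆)

/-- The defining relations of the non-abelian tensor product of Lie algebras (Ellis). -/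
def lieTensorRels (R : Type u) (M N : Type v) [CommRing R]
    [LieRing M] [LieAlgebra R M] [LieRing N] [LieAlgebra R N]
    (actM : M → N → N) (actN : N → M → M) :
    Set (FreeLieAlgebra R (M × N)) :=
  { x | (∃ (r : R) (m : M) (n : N),
          x = FreeLieAlgebra.of R (r • m, n) - r • FreeLieAlgebra.of R (m, n)) ∨
        (∃ (r : R) (m : M) (n : N),
          x = FreeLieAlgebra.of R (m, r • n) - r • FreeLieAlgebra.of R (m, n)) ∨
        (∃ (m m' : M) (n : N),
          x = FreeLieAlgebra.of R (m + m', n) - FreeLieAlgebra.of R (m, n) -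
            FreeLieAlgebra.of R (m', n)) ∨
        (∃ (m : M) (n n' : N),
          x = FreeLieAlgebra.of R (m, n + n') - FreeLieAlgebra.of R (m, n) -
            FreeLieAlgebra.of R (m, n')) ∨
        (∃ (m m' : M) (n : N),
          x = FreeLieAlgebra.of R (⁅m, m'⁆, n) - FreeLieAlgebra.of R (m, actM m' n) +
            FreeLieAlgebra.of R (m', actM m n)) ∨
        (∃ (m : M) (n n' : N),
          x = FreeLieAlgebra.of R (m, ⁅n, n'⁆) - FreeLieAlgebra.of R (actN n' m, n) +
            FreeLieAlgebra.of R (actN n m, n')) ∨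
        (∃ (m m' : M) (n n' : N),
          x = ⁅FreeLieAlgebra.of R (m, n), FreeLieAlgebra.of R (m', n')⁆ +
            FreeLieAlgebra.of R (actN n m, actM m' n')) }

/-- The non-abelian tensor product of Lie algebras (Ellis): the quotient of the free Lie
algebra on `M × N` by the Lie ideal generated by the tensor relations. -/
abbrev NALieTensor (R : Type u) (M N : Type v) [CommRing R]
    [LieRing M] [LieAlgebra R M] [LieRing N] [LieAlgebra R N]
    (actM : M → N → N) (actN : N → M → M) : Type _ :=
  FreeLieAlgebra R (M × N) ⧸
    LieSubmodule.lieSpan R (FreeLieAlgebra R (M × N)) (lieTensorRels R M N actM actN)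

/-- The generator `m ⊗ n` of the non-abelian tensor product of Lie algebras. -/
noncomputable abbrev lieTensorOf {R : Type u} {M N : Type v} [CommRing R]
    [LieRing M] [LieAlgebra R M] [LieRing N] [LieAlgebra R N]
    {actM : M → N → N} {actN : N → M → M} (m : M) (n : N) :
    NALieTensor R M N actM actN :=
  LieSubmodule.Quotient.mk (FreeLieAlgebra.of R (m, n))

section Descend

variable {R : Type u} {M N P : Type v} [CommRing R]
    [LieRing M] [LieAlgebra R M] [LieRing N] [LieAlgebra R N]
    [LieRing P] [LieAlgebra R P]

/-- `LieSubmodule.Quotient.mk` as a Lie algebra homomorphism onto `NALieTensor`. -/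
noncomputable def NALieTensor.mkHom (actM : M → N → N) (actN : N → M → M) :
    FreeLieAlgebra R (M × N) →ₗ⁅R⁆ NALieTensor R M N actM actN :=
  { (LieSubmodule.lieSpan R (FreeLieAlgebra R (M × N))
        (lieTensorRels R M N actM actN)).toSubmodule.mkQ with
    map_lie' := by
      intro x y
      exact (LieSubmodule.Quotient.mk_bracket _ x y).symm }

theorem NALieTensor.mkHom_apply (actM : M → N → N) (actN : N → M → M)
    (x : FreeLieAlgebra R (M × N)) :
    NALieTensor.mkHom actM actN x = LieSubmodule.Quotient.mk (N := LieSubmodule.lieSpan R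
      (FreeLieAlgebra R (M × N)) (lieTensorRels R M N actM actN)) x := rfl

/-- Descend a Lie hom from the free Lie algebra killing the relations. -/
noncomputable def NALieTensor.lift (actM : M → N → N) (actN : N → M → M)
    (f : FreeLieAlgebra R (M × N) →ₗ⁅R⁆ P)
    (hf : ∀ x ∈ lieTensorRels R M N actM actN, f x = 0) :
    NALieTensor R M N actM actN →ₗ⁅R⁆ P :=
  { Submodule.liftQ _ f.toLinearMap (by
      intro x hx
      have hle : LieSubmodule.lieSpan R (FreeLieAlgebra R (M × N))
          (lieTensorRels R M N actM actN) ≤ f.ker :=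
        (LieSubmodule.lieSpan_le).mpr (fun y hy => LieHom.mem_ker.mpr (hf y hy))
      simpa using LieHom.mem_ker.mp (hle hx)) with
    map_lie' := by
      intro x y
      refine Quotient.inductionOn₂' x y ?_
      intro a b
      rw [LieSubmodule.Quotient.is_quotient_mk, LieSubmodule.Quotient.is_quotient_mk,
        ← LieSubmodule.Quotient.mk_bracket]
      show Submodule.liftQ _ f.toLinearMap _ (Submodule.Quotient.mk ⁅a, b⁆) =
        ⁅Submodule.liftQ _ f.toLinearMap _ (Submodule.Quotient.mk a),
          Submodule.liftQ _ f.toLinearMap _ (Submodule.Quotient.mk b)⁆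
      simp only [Submodule.liftQ_apply, LieHom.coe_toLinearMap, LieHom.map_lie] }

theorem NALieTensor.lift_mk (actM : M → N → N) (actN : N → M → M)
    (f : FreeLieAlgebra R (M × N) →ₗ⁅R⁆ P)
    (hf : ∀ x ∈ lieTensorRels R M N actM actN, f x = 0)
    (x : FreeLieAlgebra R (M × N)) :
    NALieTensor.lift actM actN f hf (LieSubmodule.Quotient.mk x) = f x :=
  Submodule.liftQ_apply _ _ _

theorem NALieTensor.hom_ext {actM : M → N → N} {actN : N → M → M}
    {f g : NALieTensor R M N actM actN →ₗ⁅R⁆ P}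
    (h : ∀ m n, f (lieTensorOf m n) = g (lieTensorOf m n)) : f = g := by
  have key : f.comp (NALieTensor.mkHom actM actN) = g.comp (NALieTensor.mkHom actM actN) :=
    FreeLieAlgebra.hom_ext (fun p => h p.1 p.2)
  ext x
  refine Quotient.inductionOn' x ?_
  intro a
  exact LieHom.congr_fun key a

end Descend

/-- Given crossed modules of Lie algebras `μ : M → L` and `ν : N → L`, there are unique
Lie algebra homomorphisms `ρ_M : M ⊗ N → M` and `ρ_N : M ⊗ N → N` with
`ρ_M(m ⊗ n) = −(n • m)` and `ρ_N(m ⊗ n) = m • n` (mutual actions induced via `μ`, `ν`). -/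
theorem lieTensor_projections_exist_unique
    (R : Type u) {L M N : Type v} [CommRing R]
    [LieRing L] [LieAlgebra R L] [LieRing M] [LieAlgebra R M]
    [LieRing N] [LieAlgebra R N]
    (μ : M →ₗ⁅R⁆ L) (ν : N →ₗ⁅R⁆ L)
    (actLM : L → M → M) (actLN : L → N → N)
    (hμ : IsLieCrossedModule μ actLM) (hν : IsLieCrossedModule ν actLN) :
    (∃! ρM : NALieTensor R M N (fun m n => actLN (μ m) n) (fun n m => actLM (ν n) m) →ₗ⁅R⁆ M,
      ∀ (m : M) (n : N), ρM (lieTensorOf m n) = -(actLM (ν n) m)) ∧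
    (∃! ρN : NALieTensor R M N (fun m n => actLN (μ m) n) (fun n m => actLM (ν n) m) →ₗ⁅R⁆ N,
      ∀ (m : M) (n : N), ρN (lieTensorOf m n) = actLN (μ m) n) := by
  obtain ⟨⟨⟨hMsl, hMsr, hMal, hMar⟩, hMlie1, hMlie2⟩, hμeq, hμp⟩ := hμ
  obtain ⟨⟨⟨hNsl, hNsr, hNal, hNar⟩, hNlie1, hNlie2⟩, hνeq, hνp⟩ := hν
  -- the candidate generator maps
  set fM : M × N → M := fun p => -(actLM (ν p.2) p.1) with hfM
  set fN : M × N → N := fun p => actLN (μ p.1) p.2 with hfN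
  have hrelM : ∀ x ∈ lieTensorRels R M N (fun m n => actLN (μ m) n)
      (fun n m => actLM (ν n) m), FreeLieAlgebra.lift R fM x = 0 := by
    rintro x (⟨r, m, n, rfl⟩ | ⟨r, m, n, rfl⟩ | ⟨m, m', n, rfl⟩ | ⟨m, n, n', rfl⟩ |
      ⟨m, m', n, rfl⟩ | ⟨m, n, n', rfl⟩ | ⟨m, m', n, n', rfl⟩) <;>
      simp only [map_sub, map_add, map_smul, LieHom.map_lie, FreeLieAlgebra.lift_of_apply, hfM]
    · rw [hMsr, smul_neg]; abel
    · rw [hMsl, smul_neg]; abel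
    · rw [hMar]; abel
    · rw [hMal]; abel
    · have h1 : actLM (ν (actLN (μ m') n)) m
          = ⁅m', actLM (ν n) m⁆ - actLM (ν n) ⁅m', m⁆ := by
        rw [hνeq, hMlie1]; simp only [hμp]
      have h2 : actLM (ν (actLN (μ m) n)) m'
          = ⁅m, actLM (ν n) m'⁆ - actLM (ν n) ⁅m, m'⁆ := by
        rw [hνeq, hMlie1]; simp only [hμp]
      rw [h1, h2, hMlie2 (ν n) m m', hMlie2 (ν n) m' m,
        ← lie_skew (actLM (ν n) m') m, ← lie_skew (actLM (ν n) m) m']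
      abel
    · rw [hMlie1]; abel
    · have h1 : actLM (ν (actLN (μ m') n')) (actLM (ν n) m)
          = ⁅m', actLM (ν n') (actLM (ν n) m)⁆
            - actLM (ν n') ⁅m', actLM (ν n) m⁆ := by
        rw [hνeq, hMlie1]; simp only [hμp]
      rw [h1, hMlie2 (ν n') m' (actLM (ν n) m),
        ← lie_skew (actLM (ν n') m') (actLM (ν n) m), neg_lie, lie_neg, neg_neg]
      abel
  have hrelN' : ∀ x ∈ lieTensorRels R M N (fun m n => actLN (μ m) n)
      (fun n m => actLM (ν n) m), FreeLieAlgebra.lift R fN x = 0 := by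
    rintro x (⟨r, m, n, rfl⟩ | ⟨r, m, n, rfl⟩ | ⟨m, m', n, rfl⟩ | ⟨m, n, n', rfl⟩ |
      ⟨m, m', n, rfl⟩ | ⟨m, n, n', rfl⟩ | ⟨m, m', n, n', rfl⟩) <;>
      simp only [map_sub, map_add, map_smul, LieHom.map_lie, FreeLieAlgebra.lift_of_apply, hfN]
    · rw [hNsl]; abel
    · rw [hNsr]; abel
    · rw [hNal]; abel
    · rw [hNar]; abel
    · rw [hNlie1]; abel
    · have h1 : actLN (μ (actLM (ν n') m)) n
          = ⁅n', actLN (μ m) n⁆ - actLN (μ m) ⁅n', n⁆ := by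
        rw [hμeq, hNlie1]; simp only [hνp]
      have h2 : actLN (μ (actLM (ν n) m)) n'
          = ⁅n, actLN (μ m) n'⁆ - actLN (μ m) ⁅n, n'⁆ := by
        rw [hμeq, hNlie1]; simp only [hνp]
      rw [h1, h2, hNlie2 (μ m) n n', hNlie2 (μ m) n' n,
        ← lie_skew (actLN (μ m) n') n, ← lie_skew (actLN (μ m) n) n']
      abel
    · have h1 : actLN (μ (actLM (ν n) m)) (actLN (μ m') n')
          = ⁅n, actLN (μ m) (actLN (μ m') n')⁆
            - actLN (μ m) ⁅n, actLN (μ m') n'⁆ := by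
        rw [hμeq, hNlie1]; simp only [hνp]
      rw [h1, hNlie2 (μ m) n (actLN (μ m') n')]
      abel
  constructor
  · refine ⟨NALieTensor.lift _ _ (FreeLieAlgebra.lift R fM) hrelM, fun m n => ?_, fun ρ hρ => ?_⟩
    · exact (NALieTensor.lift_mk _ _ _ hrelM _).trans (FreeLieAlgebra.lift_of_apply _ _)
    · refine NALieTensor.hom_ext fun m n => ?_
      rw [hρ m n]
      exact ((NALieTensor.lift_mk _ _ _ hrelM (FreeLieAlgebra.of R (m, n))).trans
        (FreeLieAlgebra.lift_of_apply fM (m, n))).symm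
  · refine ⟨NALieTensor.lift _ _ (FreeLieAlgebra.lift R fN) hrelN', fun m n => ?_, fun ρ hρ => ?_⟩
    · exact (NALieTensor.lift_mk _ _ _ hrelN' _).trans (FreeLieAlgebra.lift_of_apply _ _)
    · refine NALieTensor.hom_ext fun m n => ?_
      rw [hρ m n]
      exact ((NALieTensor.lift_mk _ _ _ hrelN' (FreeLieAlgebra.of R (m, n))).trans
        (FreeLieAlgebra.lift_of_apply fN (m, n))).symm
end
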